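/- arXiv:1704.03121 — 2 statements merged into one kernel-verified Lean document; each statement's English description precedes it below -/
import Mathlib

section
/- (Key one-step implication for ISTC) Let Ψ ∈ ℝ^{n×p} have unit-norm columns with mutual coherence μ satisfying μ·s < 1/2, where x† ∈ ℝ^p has support A† with |A†| = s ≥ 1, and y = Ψ x† + η with ‖η‖₂ ≤ ε. Let C₁ > 1/(1 − 2μs), set α = (1 − 1/C₁)/(μs), let γ ∈ [2μs/(1 − 1/C₁), 1), and let λ ≥ C₁ ε. If x ∈ ℝ^p satisfies supp(x) ⊂ A† and ‖x − x†‖_{ℓ∞} ≤ α λ, then the one-step soft-thresholding update x⁺ = S_λ(x + Ψᵗ(y − Ψ x)) satisfies supp(x⁺) ⊂ A† and ‖x⁺ − x†‖_{ℓ∞} ≤ α γ λ. -/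
/-!
Write `z = x + Ψᵀ(y − Ψx)`. Then `z − x† = (ΨᵀΨ − 1)(x† − x) + Ψᵀη`, where `ΨᵀΨ − 1` has zero
diagonal and entries bounded by `μ`, `x† − x` lives on the `s` indices of `A†`, and each column
of `Ψ` sees at most `ε` of the noise. Hence every entry of `z − x†` is at most
`sμαλ + ε = (1 − 1/C₁)λ + ε ≤ λ`. Soft thresholding at level `λ` therefore vanishes off `A†` and
moves each entry by at most `λ`, so `‖x⁺ − x†‖_∞ ≤ 2λ`, and `2 ≤ αγ` is exactly the lower bound
on `γ`.
-/

open Finset Matrix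

/-- The soft-thresholding operator `S_λ(t) = sgn(t) · max(|t| − λ, 0)`. -/
noncomputable def softThresh (lam t : ℝ) : ℝ := Real.sign t * max (|t| - lam) 0

lemma softThresh_eq_zero_of_abs_le {lam t : ℝ} (h : |t| ≤ lam) : softThresh lam t = 0 := by
  simp [softThresh, max_eq_right (sub_nonpos.2 h)]

lemma abs_softThresh_sub_le {lam : ℝ} (hlam : 0 ≤ lam) (t : ℝ) :
    |softThresh lam t - t| ≤ lam := by
  rcases le_total |t| lam with h | h
  · simpa [softThresh_eq_zero_of_abs_le h] using h
  rw [softThresh, max_eq_left (sub_nonneg.2 h)]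
  rcases lt_trichotomy t 0 with ht | rfl | ht
  · rw [Real.sign_of_neg ht, abs_of_neg ht, show -1 * (-t - lam) - t = lam by ring,
      abs_of_nonneg hlam]
  · simpa using hlam
  · rw [Real.sign_of_pos ht, abs_of_pos ht, show 1 * (t - lam) - t = -lam by ring, abs_neg,
      abs_of_nonneg hlam]

section Thresholding

variable {ι : Type*} {lam : ℝ} {z w : ι → ℝ}

lemma support_softThresh_subset (h : ∀ i, |z i - w i| ≤ lam) :
    Function.support (fun i => softThresh lam (z i)) ⊆ Function.support w := by
  intro i hi
  by_contra hw
  rw [Function.notMem_support] at hw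
  exact hi (softThresh_eq_zero_of_abs_le (by simpa [hw] using h i))

lemma norm_softThresh_sub_le [Fintype ι] (hlam : 0 ≤ lam) (h : ∀ i, |z i - w i| ≤ lam) :
    ‖(fun i => softThresh lam (z i)) - w‖ ≤ 2 * lam := by
  refine (pi_norm_le_iff_of_nonneg (by positivity)).2 fun i => ?_
  rw [Real.norm_eq_abs, Pi.sub_apply]
  calc |softThresh lam (z i) - w i| ≤ |softThresh lam (z i) - z i| + |z i - w i| :=
        abs_sub_le _ _ _
    _ ≤ 2 * lam := by linarith [abs_softThresh_sub_le hlam (z i), h i]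

end Thresholding

lemma landweber_step_sub_eq {R m ι : Type*} [CommRing R] [Fintype m] [Fintype ι]
    [DecidableEq ι] (Ψ : Matrix m ι R) (x xdag : ι → R) (η : m → R) :
    x + Ψᵀ *ᵥ (Ψ *ᵥ xdag + η - Ψ *ᵥ x) - xdag = (Ψᵀ * Ψ - 1) *ᵥ (xdag - x) + Ψᵀ *ᵥ η := by
  simp only [sub_mulVec, mulVec_add, mulVec_sub, mulVec_mulVec, one_mulVec]
  abel

section Coherence

variable {m ι : Type*} [Fintype m]

lemma abs_mulVec_apply_le {κ : Type*} [Fintype ι] {M : Matrix κ ι ℝ} {μ : ℝ} {d : ι → ℝ}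
    {A : Finset ι} {i : κ} (hM : ∀ j, |M i j| ≤ μ) (hd : Function.support d ⊆ A) :
    |(M *ᵥ d) i| ≤ #A * (μ * ‖d‖) := by
  have hsum : ∑ j ∈ A, M i j * d j = (M *ᵥ d) i :=
    sum_subset (subset_univ A) fun j _ hj => by
      rw [Function.notMem_support.1 fun h => hj (hd h), mul_zero]
  calc |(M *ᵥ d) i| ≤ ∑ j ∈ A, |M i j * d j| := hsum ▸ abs_sum_le_sum_abs _ _
    _ ≤ ∑ j ∈ A, μ * ‖d‖ := sum_le_sum fun j _ => by
        rw [abs_mul]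
        exact mul_le_mul (hM j) (norm_le_pi_norm d j) (abs_nonneg _)
          ((abs_nonneg _).trans (hM j))
    _ = #A * (μ * ‖d‖) := by rw [sum_const, nsmul_eq_mul]

variable {Ψ : Matrix m ι ℝ} {μ : ℝ}

lemma abs_transpose_mulVec_apply_le (hcol : ∀ i, ∑ k, Ψ k i ^ 2 = 1) (η : m → ℝ) (i : ι) :
    |(Ψᵀ *ᵥ η) i| ≤ √(∑ k, η k ^ 2) := by
  refine Real.abs_le_sqrt ?_
  simpa [mulVec, dotProduct, hcol i] using sum_mul_sq_le_sq_mul_sq univ (fun k => Ψ k i) η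

lemma abs_transpose_mul_self_sub_one_apply_le [Fintype ι] [DecidableEq ι]
    (hcol : ∀ i, ∑ k, Ψ k i ^ 2 = 1) (hcoh : ∀ i j, i ≠ j → |∑ k, Ψ k i * Ψ k j| ≤ μ)
    (hμ : 0 ≤ μ) (i j : ι) : |(Ψᵀ * Ψ - 1 : Matrix ι ι ℝ) i j| ≤ μ := by
  rcases eq_or_ne i j with rfl | hij
  · simpa [mul_apply, ← sq, hcol] using hμ
  · simpa [mul_apply, one_apply_ne hij] using hcoh i j hij

lemma abs_landweber_step_apply_sub_le [Fintype ι] [DecidableEq ι]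
    (hcol : ∀ i, ∑ k, Ψ k i ^ 2 = 1) (hcoh : ∀ i j, i ≠ j → |∑ k, Ψ k i * Ψ k j| ≤ μ)
    (hμ : 0 ≤ μ) {A : Finset ι} {x xdag : ι → ℝ} (hx : Function.support x ⊆ A)
    (hxdag : Function.support xdag ⊆ A) (η : m → ℝ) (i : ι) :
    |(x + Ψᵀ *ᵥ (Ψ *ᵥ xdag + η - Ψ *ᵥ x)) i - xdag i|
      ≤ #A * (μ * ‖x - xdag‖) + √(∑ k, η k ^ 2) := by
  rw [← Pi.sub_apply, landweber_step_sub_eq, Pi.add_apply, ← norm_neg, neg_sub]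
  refine (abs_add_le _ _).trans (add_le_add ?_ (abs_transpose_mulVec_apply_le hcol η i))
  exact abs_mulVec_apply_le (abs_transpose_mul_self_sub_one_apply_le hcol hcoh hμ i)
    ((Function.support_sub _ _).trans (Set.union_subset hxdag hx))

end Coherence

section Parameters

variable {σ ε C₁ α γ lam : ℝ}

lemma one_lt_of_one_div_one_sub_two_mul_lt (hσ : 0 ≤ σ) (hσ' : σ < 1 / 2)
    (hC : 1 / (1 - 2 * σ) < C₁) : 1 < C₁ :=
  lt_of_le_of_lt ((one_le_div (by linarith)).2 (by linarith)) hC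

lemma mul_mul_add_le_of_eq_div (hσ : 0 < σ) (hC₁ : 0 < C₁) (hα : α = (1 - 1 / C₁) / σ)
    (hlam : C₁ * ε ≤ lam) : σ * (α * lam) + ε ≤ lam := by
  have hε : ε ≤ lam / C₁ := by rw [le_div_iff₀ hC₁]; linarith
  have hσα : σ * α = 1 - 1 / C₁ := by rw [hα]; field_simp
  calc σ * (α * lam) + ε ≤ (1 - 1 / C₁) * lam + lam / C₁ := by rw [← hσα]; linarith
    _ = lam := by ring

lemma two_le_mul_of_eq_div (hσ : 0 < σ) (hC₁ : 1 < C₁) (hα : α = (1 - 1 / C₁) / σ)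
    (hγ : 2 * σ / (1 - 1 / C₁) ≤ γ) : 2 ≤ α * γ := by
  have hc : 0 < 1 - 1 / C₁ := by
    rw [sub_pos, div_lt_one (by linarith)]; exact hC₁
  calc 2 = α * (2 * σ / (1 - 1 / C₁)) := by
        rw [hα]; generalize 1 - 1 / C₁ = c at hc ⊢; field_simp
    _ ≤ α * γ := mul_le_mul_of_nonneg_left hγ (hα ▸ by positivity)

end Parameters

/-- Key one-step implication for ISTC: under the mutual coherence condition `μs < 1/2`,
with `C₁ > 1/(1 − 2μs)`, `α = (1 − 1/C₁)/(μs)`, `γ ∈ [2μs/(1 − 1/C₁), 1)` and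
`λ ≥ C₁ε`, if `supp(x) ⊂ A†` and `‖x − x†‖_{ℓ∞} ≤ αλ`, then the one-step update
`x⁺ = S_λ(x + Ψᵗ(y − Ψx))` satisfies `supp(x⁺) ⊂ A†` and `‖x⁺ − x†‖_{ℓ∞} ≤ αγλ`. -/
theorem soft_step_key_implication {n p : ℕ} (Ψ : Matrix (Fin n) (Fin p) ℝ)
    (μ ε C₁ α γ lam : ℝ) (s : ℕ)
    (xdag : Fin p → ℝ) (η y : Fin n → ℝ) (Adag : Finset (Fin p))
    (hcol : ∀ i, ∑ k, Ψ k i ^ 2 = 1)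
    (hcoh : ∀ i j, i ≠ j → |∑ k, Ψ k i * Ψ k j| ≤ μ) (hμpos : 0 < μ)
    (hsuppdag : Function.support xdag = (Adag : Set (Fin p)))
    (hcard : Adag.card = s) (hs : 1 ≤ s) (hμs : μ * s < 1 / 2)
    (hy : y = Ψ.mulVec xdag + η)
    (hη : Real.sqrt (∑ k, η k ^ 2) ≤ ε)
    (hC : 1 / (1 - 2 * μ * s) < C₁)
    (hα : α = (1 - 1 / C₁) / (μ * s))
    (hγ : γ ∈ Set.Ico (2 * μ * s / (1 - 1 / C₁)) 1)
    (hlam : C₁ * ε ≤ lam)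
    (x : Fin p → ℝ)
    (hsupp : Function.support x ⊆ (Adag : Set (Fin p)))
    (hE : ‖x - xdag‖ ≤ α * lam) :
    Function.support
        (fun i => softThresh lam (x i + Ψ.transpose.mulVec (y - Ψ.mulVec x) i))
      ⊆ (Adag : Set (Fin p)) ∧
    ‖(fun i => softThresh lam (x i + Ψ.transpose.mulVec (y - Ψ.mulVec x) i)) - xdag‖
      ≤ α * γ * lam := by
  have hσ : 0 < μ * s := mul_pos hμpos (by exact_mod_cast hs)
  have hC₁ : 1 < C₁ :=
    one_lt_of_one_div_one_sub_two_mul_lt hσ.le hμs (by rwa [mul_assoc] at hC)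
  have hlam₀ : 0 ≤ lam :=
    (mul_nonneg (by linarith) ((Real.sqrt_nonneg _).trans hη)).trans hlam
  have hxdag : Function.support xdag ⊆ Adag := hsuppdag.le
  have hz : ∀ i, |(x + Ψᵀ *ᵥ (y - Ψ *ᵥ x)) i - xdag i| ≤ lam := fun i => calc
    _ ≤ s * (μ * ‖x - xdag‖) + √(∑ k, η k ^ 2) := by
        simpa [hy, hcard] using
          abs_landweber_step_apply_sub_le hcol hcoh hμpos.le hsupp hxdag η i
    _ ≤ μ * s * (α * lam) + ε := by
        rw [← mul_assoc, mul_comm (s : ℝ)]; gcongr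
    _ ≤ lam := mul_mul_add_le_of_eq_div hσ (by linarith) hα hlam
  refine ⟨(support_softThresh_subset hz).trans hxdag, ?_⟩
  calc _ ≤ 2 * lam := norm_softThresh_sub_le hlam₀ hz
    _ ≤ α * γ * lam := mul_le_mul_of_nonneg_right
        (two_le_mul_of_eq_div hσ hC₁ hα (by rw [← mul_assoc]; exact hγ.1)) hlam₀
end

section
/- (Induction claim for IHTC) Let Ψ ∈ ℝ^{n×p} have unit-norm columns with mutual coherence μ satisfying μ·s < 1/2, where x† ∈ ℝ^p has support A† with |A†| = s ≥ 1, and y = Ψ x† + η with ‖η‖₂ ≤ ε. Let C₀ > 1/(2(1 − 2μs)²), α = (1 − 1/√(2C₀))/(μs), γ ∈ [(2μs/(1 − 1/√(2C₀)))², 1), K ≥ 1 an integer, and λ* = C₀ ε². Define λ_ℓ = γ^ℓ λ₀ for ℓ ≥ 0, and define x(λ₀) = 0 and, for ℓ ≥ 1, x(λ_ℓ) as the result of K iterations of the map z ↦ H_{λ_ℓ}(z + Ψᵗ(y − Ψ z)) starting from x(λ_{ℓ−1}). If λ₀ is large enough that ‖x†‖_{ℓ∞} ≤ α √(2γλ₀),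 then for every ℓ ≥ 0 with λ_ℓ ≥ λ*, one has supp(x(λ_ℓ)) ⊂ A† and ‖x(λ_ℓ) − x†‖_{ℓ∞} ≤ α √(2γλ_ℓ). -/
open Finset Matrix

/-- The hard-thresholding operator `H_λ(t) = t` if `|t| > √(2λ)`, else `0`. -/
noncomputable def hardThresh (lam t : ℝ) : ℝ :=
  if Real.sqrt (2 * lam) < |t| then t else 0

open Function Set

/-!
On the set of vectors supported in `A†` within sup-distance `α √(2λ)` of `x†`, the error of a
gradient step `z + Ψᵀ(y - Ψz)` is, coordinatewise, at most `μ s α √(2λ) + ε`: the diagonal of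
`ΨᵀΨ` cancels `z - x†`, at most `s` off-diagonal entries of size `≤ μ` meet the support, and
`|⟨ψ_i, η⟩| ≤ ε`. The choice of `α` and `λ ≥ C₀ ε²` make this at most the threshold `√(2λ)`, so
`H_λ` zeroes every entry off `A†` and leaves an error `≤ 2 √(2λ) ≤ α √(2γλ)` by the choice of `γ`.
The set is therefore invariant, `K ≥ 1` steps land in the smaller set of radius
`α √(2γλ_ℓ) = α √(2λ_{ℓ+1})`, and induction along the path finishes.
-/

theorem hardThresh_eq_zero_of_abs_le {lam t : ℝ} (h : |t| ≤ √(2 * lam)) :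
    hardThresh lam t = 0 :=
  if_neg h.not_gt

theorem abs_hardThresh_sub_le {lam t a : ℝ} (h : |t - a| ≤ √(2 * lam)) :
    |hardThresh lam t - a| ≤ 2 * √(2 * lam) := by
  unfold hardThresh
  split_ifs
  · linarith [Real.sqrt_nonneg (2 * lam)]
  · rw [zero_sub, abs_neg]
    linarith [abs_sub_abs_le_abs_sub a t, abs_sub_comm a t]

theorem Set.MapsTo.iterate_of_subset {α : Type*} {f : α → α} {s t : Set α}
    (hf : MapsTo f s t) (hts : t ⊆ s) {K : ℕ} (hK : 1 ≤ K) : MapsTo f^[K] s t := by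
  obtain ⟨K, rfl⟩ := Nat.exists_eq_add_of_le' hK
  rw [iterate_succ']
  exact hf.comp ((hf.mono_right hts).iterate K)

theorem ihtc_parameters {κ C₀ α γ : ℝ} (hκ : 0 < κ) (hκ2 : κ < 1 / 2)
    (hC : 1 / (2 * (1 - 2 * κ) ^ 2) < C₀) (hα : α = (1 - 1 / √(2 * C₀)) / κ)
    (hγ : (2 * κ / (1 - 1 / √(2 * C₀))) ^ 2 ≤ γ) :
    0 < C₀ ∧ 0 < α ∧ κ * α + 1 / √(2 * C₀) = 1 ∧ 2 ≤ α * √γ := by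
  have hgap : 0 < 1 - 2 * κ := by linarith
  have hC₀ : 0 < C₀ := lt_trans (by positivity) hC
  have hsqrt : 1 / (1 - 2 * κ) < √(2 * C₀) := by
    rw [Real.lt_sqrt (by positivity), div_pow, one_pow]
    calc 1 / (1 - 2 * κ) ^ 2 = 2 * (1 / (2 * (1 - 2 * κ) ^ 2)) := by field_simp
      _ < 2 * C₀ := by gcongr
  have hc : 1 / √(2 * C₀) < 1 - 2 * κ := (one_div_lt (by positivity) hgap).mpr hsqrt
  have hα0 : 0 < α := by rw [hα]; exact div_pos (by linarith) hκ
  have hsum : κ * α + 1 / √(2 * C₀) = 1 := by rw [hα]; field_simp; ring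
  refine ⟨hC₀, hα0, hsum, ?_⟩
  have h2α : 2 / α ≤ √γ := by
    rw [Real.le_sqrt (by positivity) (le_trans (sq_nonneg _) hγ)]
    convert hγ using 2
    rw [hα]; field_simp
  rwa [div_le_iff₀' hα0] at h2α

theorem le_one_div_sqrt_mul_sqrt_of_mul_sq_le {C₀ ε lam : ℝ} (hC₀ : 0 < C₀) (hε : 0 ≤ ε)
    (h : C₀ * ε ^ 2 ≤ lam) : ε ≤ 1 / √(2 * C₀) * √(2 * lam) := by
  have hlam : 0 ≤ lam := le_trans (by positivity) h
  rw [one_div, ← Real.sqrt_inv, ← Real.sqrt_mul (by positivity), Real.le_sqrt hε (by positivity)]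
  calc ε ^ 2 = C₀ * ε ^ 2 / C₀ := by field_simp
    _ ≤ lam / C₀ := by gcongr
    _ = (2 * C₀)⁻¹ * (2 * lam) := by field_simp

variable {m ι : Type*} [Fintype m]

theorem abs_transpose_mulVec_le (Ψ : Matrix m ι ℝ) (η : m → ℝ) {i : ι}
    (hcol : ∑ k, Ψ k i ^ 2 = 1) : |(Ψᵀ *ᵥ η) i| ≤ √(∑ k, η k ^ 2) := by
  refine Real.abs_le_sqrt ?_
  simpa [mulVec, dotProduct, hcol] using sum_mul_sq_le_sq_mul_sq univ (fun k => Ψ k i) η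

variable [Fintype ι]

def sparseBall (A : Finset ι) (x : ι → ℝ) (r : ℝ) : Set (ι → ℝ) :=
  {z | support z ⊆ A ∧ ‖z - x‖ ≤ r}

theorem sparseBall_mono {A : Finset ι} {x : ι → ℝ} {r r' : ℝ} (h : r ≤ r') :
    sparseBall A x r ⊆ sparseBall A x r' :=
  fun _ hz => ⟨hz.1, hz.2.trans h⟩

def gradStep (Ψ : Matrix m ι ℝ) (y : m → ℝ) (z : ι → ℝ) : ι → ℝ :=
  z + Ψᵀ *ᵥ (y - Ψ *ᵥ z)

noncomputable def ihtStep (Ψ : Matrix m ι ℝ) (y : m → ℝ) (lam : ℝ) (z : ι → ℝ) : ι → ℝ :=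
  fun i => hardThresh lam (gradStep Ψ y z i)

variable [DecidableEq ι]

theorem abs_sum_erase_mul_le (G : Matrix ι ι ℝ) {μ β : ℝ} (A : Finset ι)
    {v : ι → ℝ} (i : ι) (hG : ∀ j, i ≠ j → |G i j| ≤ μ) (hμ : 0 ≤ μ)
    (hv : support v ⊆ A) (hβ : ∀ j, |v j| ≤ β) :
    |∑ j ∈ univ.erase i, G i j * v j| ≤ μ * #A * β := by
  have hβ0 : 0 ≤ β := (abs_nonneg _).trans (hβ i)
  have hzero : ∀ j ∈ univ.erase i, j ∉ A.erase i → G i j * v j = 0 := fun j hj hjA => by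
    have : v j = 0 := notMem_support.mp fun h => hjA (mem_erase.mpr ⟨ne_of_mem_erase hj, hv h⟩)
    rw [this, mul_zero]
  rw [← sum_subset (erase_subset_erase i (subset_univ A)) hzero]
  calc |∑ j ∈ A.erase i, G i j * v j| ≤ ∑ j ∈ A.erase i, |G i j * v j| := abs_sum_le_sum_abs _ _
    _ ≤ ∑ j ∈ A.erase i, μ * β := sum_le_sum fun j hj => by
        rw [abs_mul]
        exact mul_le_mul (hG j (ne_of_mem_erase hj).symm) (hβ j) (abs_nonneg _) hμ
    _ = #(A.erase i) * (μ * β) := by rw [sum_const, nsmul_eq_mul]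
    _ ≤ #A * (μ * β) := by gcongr; exact erase_subset i A
    _ = μ * #A * β := by ring

theorem gradStep_sub_eq (Ψ : Matrix m ι ℝ) (x z : ι → ℝ) (η : m → ℝ) {i : ι}
    (hcol : ∑ k, Ψ k i ^ 2 = 1) :
    gradStep Ψ (Ψ *ᵥ x + η) z i - x i
      = ∑ j ∈ univ.erase i, (Ψᵀ * Ψ) i j * (x - z) j + (Ψᵀ *ᵥ η) i := by
  have hdiag : (Ψᵀ * Ψ) i i = 1 := by simpa [mul_apply, sq] using hcol
  have hres : Ψ *ᵥ x + η - Ψ *ᵥ z = Ψ *ᵥ (x - z) + η := by rw [mulVec_sub]; abel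
  rw [gradStep, hres, Pi.add_apply, mulVec_add, mulVec_mulVec, Pi.add_apply, mulVec, dotProduct,
    ← add_sum_erase _ _ (mem_univ i), hdiag, Pi.sub_apply]
  ring

theorem abs_gradStep_sub_le (Ψ : Matrix m ι ℝ) {μ ε r : ℝ}
    {A : Finset ι} {x z : ι → ℝ} {η : m → ℝ} (hcol : ∀ i, ∑ k, Ψ k i ^ 2 = 1)
    (hcoh : ∀ i j, i ≠ j → |∑ k, Ψ k i * Ψ k j| ≤ μ) (hμ : 0 ≤ μ)
    (hη : √(∑ k, η k ^ 2) ≤ ε) (hx : support x ⊆ A) (hz : z ∈ sparseBall A x r) (i : ι) :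
    |gradStep Ψ (Ψ *ᵥ x + η) z i - x i| ≤ μ * #A * r + ε := by
  have hsupp : support (x - z) ⊆ A := (support_sub x z).trans (union_subset hx hz.1)
  have hdist : ∀ j, |(x - z) j| ≤ r := fun j => by
    rw [Pi.sub_apply, abs_sub_comm, ← Real.norm_eq_abs]
    exact (norm_le_pi_norm (z - x) j).trans hz.2
  rw [gradStep_sub_eq Ψ x z η (hcol i)]
  refine (abs_add_le _ _).trans (add_le_add ?_ ((abs_transpose_mulVec_le Ψ η (hcol i)).trans hη))
  exact abs_sum_erase_mul_le _ A i (fun j hij => by simpa [mul_apply] using hcoh i j hij) hμ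
    hsupp hdist

theorem ihtStep_mapsTo (Ψ : Matrix m ι ℝ) {μ ε lam a c : ℝ}
    {A : Finset ι} {x : ι → ℝ} {η : m → ℝ} (hcol : ∀ i, ∑ k, Ψ k i ^ 2 = 1)
    (hcoh : ∀ i j, i ≠ j → |∑ k, Ψ k i * Ψ k j| ≤ μ) (hμ : 0 ≤ μ)
    (hη : √(∑ k, η k ^ 2) ≤ ε) (hx : support x ⊆ A) (hac : μ * #A * a + c ≤ 1)
    (hε : ε ≤ c * √(2 * lam)) :
    MapsTo (ihtStep Ψ (Ψ *ᵥ x + η) lam) (sparseBall A x (a * √(2 * lam)))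
      (sparseBall A x (2 * √(2 * lam))) := by
  intro z hz
  have herr : ∀ i, |gradStep Ψ (Ψ *ᵥ x + η) z i - x i| ≤ √(2 * lam) := fun i => by
    have := abs_gradStep_sub_le Ψ hcol hcoh hμ hη hx hz i
    nlinarith [Real.sqrt_nonneg (2 * lam)]
  refine ⟨fun i hi => ?_, (pi_norm_le_iff_of_nonneg (by positivity)).mpr fun i => ?_⟩
  · by_contra hiA
    have hxi : x i = 0 := notMem_support.mp fun h => hiA (hx h)
    exact hi (hardThresh_eq_zero_of_abs_le (by simpa [hxi] using herr i))
  · exact abs_hardThresh_sub_le (herr i)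

theorem ihtStep_iterate_mapsTo (Ψ : Matrix m ι ℝ)
    {μ ε C₀ α γ lam : ℝ} {K : ℕ} {A : Finset ι} {x : ι → ℝ} {η : m → ℝ}
    (hcol : ∀ i, ∑ k, Ψ k i ^ 2 = 1) (hcoh : ∀ i j, i ≠ j → |∑ k, Ψ k i * Ψ k j| ≤ μ)
    (hμ : 0 ≤ μ) (hη : √(∑ k, η k ^ 2) ≤ ε) (hx : support x ⊆ A) (hC₀ : 0 < C₀)
    (hα : 0 ≤ α) (hαc : μ * #A * α + 1 / √(2 * C₀) = 1) (hγ₀ : 0 ≤ γ) (hγ₁ : γ ≤ 1)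
    (hαγ : 2 ≤ α * √γ)
    (hK : 1 ≤ K) (hlam : C₀ * ε ^ 2 ≤ lam) :
    MapsTo (ihtStep Ψ (Ψ *ᵥ x + η) lam)^[K] (sparseBall A x (α * √(2 * lam)))
      (sparseBall A x (α * √(2 * γ * lam))) := by
  have hlam0 : 0 ≤ lam := le_trans (by positivity) hlam
  have hε : ε ≤ 1 / √(2 * C₀) * √(2 * lam) :=
    le_one_div_sqrt_mul_sqrt_of_mul_sq_le hC₀ ((Real.sqrt_nonneg _).trans hη) hlam
  have hstep := ihtStep_mapsTo Ψ hcol hcoh hμ hη hx hαc.le hε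
  refine (hstep.mono_right (sparseBall_mono ?_)).iterate_of_subset (sparseBall_mono ?_) hK
  · rw [show 2 * γ * lam = γ * (2 * lam) by ring, Real.sqrt_mul hγ₀, ← mul_assoc]
    exact mul_le_mul_of_nonneg_right hαγ (Real.sqrt_nonneg _)
  · exact mul_le_mul_of_nonneg_left (Real.sqrt_le_sqrt (by nlinarith [hγ₁])) hα

/-- Induction claim for IHTC: along the continuation path `λ_ℓ = γ^ℓ λ₀`, with
`x(λ₀) = 0` and `x(λ_ℓ)` obtained by `K` hard-thresholding iterations at level `λ_ℓ`
warm-started from `x(λ_{ℓ−1})`, if `‖x†‖_{ℓ∞} ≤ α√(2γλ₀)`, then for every `ℓ` with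
`λ_ℓ ≥ λ* = C₀ε²` one has `supp(x(λ_ℓ)) ⊂ A†` and `‖x(λ_ℓ) − x†‖_{ℓ∞} ≤ α√(2γλ_ℓ)`. -/
theorem ihtc_induction_claim {n p : ℕ} (Ψ : Matrix (Fin n) (Fin p) ℝ)
    (μ ε C₀ α γ lam₀ : ℝ) (s K : ℕ)
    (xdag : Fin p → ℝ) (η y : Fin n → ℝ) (Adag : Finset (Fin p))
    (hcol : ∀ i, ∑ k, Ψ k i ^ 2 = 1)
    (hcoh : ∀ i j, i ≠ j → |∑ k, Ψ k i * Ψ k j| ≤ μ) (hμpos : 0 < μ)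
    (hsuppdag : Function.support xdag = (Adag : Set (Fin p)))
    (hcard : Adag.card = s) (hs : 1 ≤ s) (hμs : μ * s < 1 / 2)
    (hy : y = Ψ.mulVec xdag + η)
    (hη : Real.sqrt (∑ k, η k ^ 2) ≤ ε)
    (hC : 1 / (2 * (1 - 2 * μ * s) ^ 2) < C₀)
    (hα : α = (1 - 1 / Real.sqrt (2 * C₀)) / (μ * s))
    (hγ : γ ∈ Set.Ico ((2 * μ * s / (1 - 1 / Real.sqrt (2 * C₀))) ^ 2) 1)
    (hK : 1 ≤ K)
    (xseq : ℕ → Fin p → ℝ)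
    (hx0 : xseq 0 = 0)
    (hxstep : ∀ ℓ : ℕ, xseq (ℓ + 1) =
      (fun z : Fin p → ℝ => fun i =>
          hardThresh (γ ^ (ℓ + 1) * lam₀)
            (z i + Ψ.transpose.mulVec (y - Ψ.mulVec z) i))^[K] (xseq ℓ))
    (hlam₀ : ‖xdag‖ ≤ α * Real.sqrt (2 * γ * lam₀)) :
    ∀ ℓ : ℕ, C₀ * ε ^ 2 ≤ γ ^ ℓ * lam₀ →
      Function.support (xseq ℓ) ⊆ (Adag : Set (Fin p)) ∧
      ‖xseq ℓ - xdag‖ ≤ α * Real.sqrt (2 * γ * (γ ^ ℓ * lam₀)) := by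
  subst hy hcard
  obtain ⟨hC₀, hα₀, hαc, hαγ⟩ := ihtc_parameters (γ := γ) (mul_pos hμpos (by exact_mod_cast hs)) hμs
    (by rwa [← mul_assoc]) hα (by rw [← mul_assoc]; exact hγ.1)
  have hγ₀ : 0 < γ := Real.sqrt_pos.mp (pos_of_mul_pos_right (by linarith) hα₀.le)
  have hlevel := fun lam => ihtStep_iterate_mapsTo Ψ (lam := lam) hcol hcoh hμpos.le hη
    hsuppdag.le hC₀ hα₀.le hαc hγ₀.le hγ.2.le hαγ hK
  intro ℓ
  induction ℓ with
  | zero => intro _; simpa [hx0] using hlam₀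
  | succ ℓ ih =>
    intro hlam
    have hprev : C₀ * ε ^ 2 ≤ γ ^ ℓ * lam₀ := by
      have hCε : 0 ≤ C₀ * ε ^ 2 := by positivity
      rw [pow_succ γ ℓ, mul_right_comm] at hlam
      nlinarith [hγ.2]
    have hradius : 2 * γ * (γ ^ ℓ * lam₀) = 2 * (γ ^ (ℓ + 1) * lam₀) := by ring
    rw [hxstep ℓ]
    refine hlevel _ hlam ?_
    rw [← hradius]
    exact ih hprev
end
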